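/- If T ⊥_{ωB} (ω(T)·S − ω(S)·T), then ω(T + S) = ω(T) + ω(S). -/

import Mathlib

open Filter Topology ComplexOrder

variable {H : Type*} [NormedAddCommGroup H] [InnerProductSpace ℂ H] [CompleteSpace H]

/-- The numerical radius of a bounded operator `T`:
`ω(T) = sup {|⟨Tx, x⟩| : ‖x‖ = 1}`. -/
noncomputable def numRad (T : H →L[ℂ] H) : ℝ :=
  sSup {r : ℝ | ∃ x : H, ‖x‖ = 1 ∧ r = ‖(inner ℂ x (T x) : ℂ)‖}

/-- Numerical radius Birkhoff orthogonality: `ω(T + λS) ≥ ω(T)` for all `λ ∈ ℂ`. -/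
def wBOrth (T S : H →L[ℂ] H) : Prop :=
  ∀ lam : ℂ, numRad T ≤ numRad (T + lam • S)

/-!
With `a = ω(T)`, `b = ω(S)` and `a > 0`, the choice `λ = (a + b)⁻¹` in the orthogonality
hypothesis gives `T + λ (a S - b T) = a / (a + b) • (T + S)`, so
`a ≤ a / (a + b) · ω(T + S)`, i.e. `a + b ≤ ω(T + S)`; the triangle inequality gives the
other direction. When `a = 0`, `ω(S) ≤ ω(T + S) + ω(-T) = ω(T + S)`.
-/

theorem add_inv_smul_smul_sub_smul {K E : Type*} [Field K] [AddCommGroup E] [Module K E]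
    {a b : K} (hab : a + b ≠ 0) (x y : E) :
    x + (a + b)⁻¹ • (a • y - b • x) = (a / (a + b)) • (x + y) := by
  match_scalars <;> field_simp
  ring

section

variable {E : Type*} [NormedAddCommGroup E] [InnerProductSpace ℂ E]

theorem numRad_set_bddAbove (T : E →L[ℂ] E) :
    BddAbove {r : ℝ | ∃ x : E, ‖x‖ = 1 ∧ r = ‖(inner ℂ x (T x) : ℂ)‖} := by
  refine ⟨‖T‖, ?_⟩
  rintro r ⟨x, hx, rfl⟩
  calc ‖(inner ℂ x (T x) : ℂ)‖ ≤ ‖x‖ * ‖T x‖ := norm_inner_le_norm x (T x)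
    _ ≤ ‖x‖ * (‖T‖ * ‖x‖) := by gcongr; exact T.le_opNorm x
    _ = ‖T‖ := by rw [hx]; ring

theorem numRad_nonneg (T : E →L[ℂ] E) : 0 ≤ numRad T :=
  Real.sSup_nonneg (by rintro r ⟨x, -, rfl⟩; exact norm_nonneg _)

theorem norm_inner_le_numRad (T : E →L[ℂ] E) {x : E} (hx : ‖x‖ = 1) :
    ‖(inner ℂ x (T x) : ℂ)‖ ≤ numRad T :=
  le_csSup (numRad_set_bddAbove T) ⟨x, hx, rfl⟩

theorem numRad_add_le (T S : E →L[ℂ] E) :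
    numRad (T + S) ≤ numRad T + numRad S := by
  refine Real.sSup_le ?_ (add_nonneg (numRad_nonneg T) (numRad_nonneg S))
  rintro r ⟨x, hx, rfl⟩
  rw [add_apply, inner_add_right]
  exact (norm_add_le _ _).trans
    (add_le_add (norm_inner_le_numRad T hx) (norm_inner_le_numRad S hx))

theorem numRad_smul_le (c : ℂ) (T : E →L[ℂ] E) :
    numRad (c • T) ≤ ‖c‖ * numRad T := by
  refine Real.sSup_le ?_ (mul_nonneg (norm_nonneg c) (numRad_nonneg T))
  rintro r ⟨x, hx, rfl⟩
  rw [smul_apply, inner_smul_right, norm_mul]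
  exact mul_le_mul_of_nonneg_left (norm_inner_le_numRad T hx) (norm_nonneg c)

theorem numRad_sub_le_numRad_add (T S : E →L[ℂ] E) :
    numRad S - numRad T ≤ numRad (T + S) := by
  have hneg : numRad ((-1 : ℂ) • T) ≤ numRad T := by
    simpa using numRad_smul_le (-1) T
  have hS : S = (T + S) + (-1 : ℂ) • T := by rw [neg_one_smul]; abel
  have htri := numRad_add_le (T + S) ((-1 : ℂ) • T)
  rw [← hS] at htri
  linarith

theorem add_le_numRad_add_of_wBOrth {T S : E →L[ℂ] E} (hT : 0 < numRad T)
    (h : wBOrth T ((numRad T : ℂ) • S - (numRad S : ℂ) • T)) :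
    numRad T + numRad S ≤ numRad (T + S) := by
  set a := numRad T
  set b := numRad S
  have hab : 0 < a + b := add_pos_of_pos_of_nonneg hT (numRad_nonneg S)
  have hab' : (a : ℂ) + b ≠ 0 := by exact_mod_cast hab.ne'
  have hcoef : ‖(a : ℂ) / (a + b)‖ = a / (a + b) := by
    rw [← Complex.ofReal_add, ← Complex.ofReal_div, Complex.norm_real, Real.norm_eq_abs,
      abs_of_pos (div_pos hT hab)]
  have key : a ≤ a / (a + b) * numRad (T + S) :=
    calc a ≤ numRad (T + ((a : ℂ) + b)⁻¹ • ((a : ℂ) • S - (b : ℂ) • T)) := h _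
      _ = numRad (((a : ℂ) / (a + b)) • (T + S)) := by rw [add_inv_smul_smul_sub_smul hab']
      _ ≤ ‖(a : ℂ) / (a + b)‖ * numRad (T + S) := numRad_smul_le _ _
      _ = a / (a + b) * numRad (T + S) := by rw [hcoef]
  rw [div_mul_eq_mul_div, le_div_iff₀ hab] at key
  exact le_of_mul_le_mul_left key hT

end

theorem stmt_13 (T S : H →L[ℂ] H)
    (h : wBOrth T ((numRad T : ℂ) • S - (numRad S : ℂ) • T)) :
    numRad (T + S) = numRad T + numRad S := by
  refine le_antisymm (numRad_add_le T S) ?_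
  rcases (numRad_nonneg T).eq_or_lt with hT | hT
  · linarith [numRad_sub_le_numRad_add T S]
  · exact add_le_numRad_add_of_wBOrth hT h
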